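/- Let (φ, N) be a Weil–Deligne pair on a finite-dimensional Ω-vector space V with φ diagonalizable, and suppose (φ, N) is pure of weight k ∈ ℚ. Then for every integer i ≥ 1 the map N is injective on V_{k+i}, and for every integer i ≥ 0 one has the direct sum decomposition V_{k+i} = N(V_{k+i+2}) ⊕ (V_{k+i} ∩ ker(N^{i+1})). -/

import Mathlib

/-!
Since `N φ = q φ N`, the operator `N` maps the generalized `α`-eigenspace of `φ` into the
generalized `α / q`-eigenspace, and `α / q` is a Weil number of weight two less; so `N` lowers
weights by `2`. Given this, injectivity of `N^{i+2}` on `V_{k+i+2}` shows that `N(V_{k+i+2})`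
meets `ker N^{i+1}` trivially. For `x ∈ V_{k+i}`, the vector `N^{i+1} x` lies in
`V_{k-i-2} = N^{i+2}(V_{k+i+2})`, say `N^{i+2} y`, and then `x = N y + (x - N y)` with
`x - N y ∈ ker N^{i+1}`.
-/

open Module

section WeilDeligne

variable {Ω V : Type*} [Field Ω] [CharZero Ω] [AddCommGroup V] [Module Ω V]

/-- `α ∈ Ω` is a Weil `q^w`-number: it is algebraic over `ℚ` and for every embedding
`σ : Ω → ℂ` one has `|σ α|² = q^w` (real exponentiation). -/
def IsWeilNumber (q : ℕ) (w : ℚ) (α : Ω) : Prop :=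
  IsAlgebraic ℚ α ∧ ∀ σ : Ω →+* ℂ, ‖σ α‖ ^ 2 = (q : ℝ) ^ (w : ℝ)

/-- The weight-`w` part `V_w` of `V` relative to `φ`: the sum of the generalized
eigenspaces of `φ` for those eigenvalues which are Weil `q^w`-numbers. -/
noncomputable def wdWeightSpace (q : ℕ) (φ : Module.End Ω V) (w : ℚ) : Submodule Ω V :=
  ⨆ α ∈ {α : Ω | IsWeilNumber q w α}, φ.maxGenEigenspace α

/-- `(φ, N)` is mixed: `V` is the internal direct sum of the `V_w`, `w ∈ ℚ`. -/
def WDMixed (q : ℕ) (φ : Module.End Ω V) : Prop :=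
  DirectSum.IsInternal fun w : ℚ => wdWeightSpace q φ w

/-- `(φ, N)` is pure of weight `k`: it is mixed, all weights lie in `k + ℤ`, and for every
`i ≥ 1` the map `N^i` restricts to a bijection from `V_{k+i}` onto `V_{k-i}`. -/
def WDPure (q : ℕ) (φ N : Module.End Ω V) (k : ℚ) : Prop :=
  WDMixed q φ ∧
  (∀ w : ℚ, (¬ ∃ i : ℤ, w = k + i) → wdWeightSpace q φ w = ⊥) ∧
  ∀ i : ℤ, 1 ≤ i →
    (∀ x ∈ wdWeightSpace q φ (k + i), (N ^ i.toNat) x = 0 → x = 0) ∧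
    Submodule.map (N ^ i.toNat) (wdWeightSpace q φ (k + i)) = wdWeightSpace q φ (k - i)

end WeilDeligne

namespace Module.End

variable {K V : Type*} [Field K] [AddCommGroup V] [Module K V]

theorem semiconjBy_sub_smul_one {c : K} (hc : c ≠ 0) {φ N : Module.End K V}
    (hrel : N * φ = c • (φ * N)) (α : K) :
    SemiconjBy N (φ - α • 1) (c • (φ - (α / c) • 1)) := by
  rw [SemiconjBy, mul_sub, hrel, smul_sub, smul_smul, mul_div_cancel₀ _ hc, sub_mul,
    smul_mul_assoc, smul_mul_assoc, one_mul, mul_smul_comm, mul_one]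

theorem map_maxGenEigenspace_le_of_mul_eq_smul {c : K} (hc : c ≠ 0) {φ N : Module.End K V}
    (hrel : N * φ = c • (φ * N)) (α : K) :
    (φ.maxGenEigenspace α).map N ≤ φ.maxGenEigenspace (α / c) := by
  rintro _ ⟨x, hx, rfl⟩
  obtain ⟨n, hn⟩ := (mem_maxGenEigenspace φ α x).mp hx
  refine (mem_maxGenEigenspace φ (α / c) (N x)).mpr ⟨n, ?_⟩
  have h := LinearMap.congr_fun ((semiconjBy_sub_smul_one hc hrel α).pow_right n).eq x
  rw [mul_apply, mul_apply, hn, map_zero, smul_pow, LinearMap.smul_apply] at h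
  exact (smul_eq_zero.mp h.symm).resolve_left (pow_ne_zero n hc)

end Module.End

section WeilDeligne

variable {Ω V : Type*} [Field Ω] [CharZero Ω] [AddCommGroup V] [Module Ω V]

theorem IsWeilNumber.div_natCast {q : ℕ} (hq : 0 < q) {w : ℚ} {α : Ω}
    (h : IsWeilNumber q w α) : IsWeilNumber q (w - 2) (α / q) := by
  refine ⟨?_, fun σ => ?_⟩
  · simpa [Algebra.smul_def, div_eq_inv_mul] using h.1.smul ((q : ℚ)⁻¹)
  · rw [map_div₀, map_natCast, norm_div, Complex.norm_natCast, div_pow, h.2 σ,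
      show ((w - 2 : ℚ) : ℝ) = w - 2 by push_cast; ring, Real.rpow_sub (by positivity)]
    norm_cast

theorem map_wdWeightSpace_le {q : ℕ} (hq : 0 < q) {φ N : Module.End Ω V}
    (hrel : N * φ = (q : Ω) • (φ * N)) (w : ℚ) :
    (wdWeightSpace q φ w).map N ≤ wdWeightSpace q φ (w - 2) := by
  have hq0 : (q : Ω) ≠ 0 := Nat.cast_ne_zero.mpr hq.ne'
  simp only [wdWeightSpace, Submodule.map_iSup, iSup_le_iff]
  intro α hα
  exact (Module.End.map_maxGenEigenspace_le_of_mul_eq_smul hq0 hrel α).trans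
    (le_biSup (fun β => φ.maxGenEigenspace β) (IsWeilNumber.div_natCast hq hα))

theorem map_pow_wdWeightSpace_le {q : ℕ} (hq : 0 < q) {φ N : Module.End Ω V}
    (hrel : N * φ = (q : Ω) • (φ * N)) (w : ℚ) (m : ℕ) :
    (wdWeightSpace q φ w).map (N ^ m) ≤ wdWeightSpace q φ (w - 2 * m) := by
  induction m with
  | zero => simp [Module.End.one_eq_id]
  | succ m ih =>
    rw [pow_succ', Module.End.mul_eq_comp, Submodule.map_comp]
    refine (Submodule.map_mono ih).trans ((map_wdWeightSpace_le hq hrel _).trans_eq ?_)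
    congr 1
    push_cast
    ring

end WeilDeligne

namespace Submodule

variable {R M : Type*} [Ring R] [AddCommGroup M] [Module R M] {f : Module.End R M}
  {A B : Submodule R M} {m : ℕ}

theorem disjoint_map_inf_ker_pow (hinj : ∀ x ∈ A, (f ^ (m + 1)) x = 0 → x = 0) :
    Disjoint (A.map f) (B ⊓ LinearMap.ker (f ^ m)) := by
  rw [disjoint_def]
  rintro _ ⟨y, hy, rfl⟩ hfy
  rw [hinj y hy (by rw [pow_succ, Module.End.mul_apply]; exact (mem_inf.mp hfy).2), map_zero]

theorem map_sup_inf_ker_pow_eq (hAB : A.map f ≤ B)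
    (hsurj : B.map (f ^ m) ≤ A.map (f ^ (m + 1))) :
    A.map f ⊔ (B ⊓ LinearMap.ker (f ^ m)) = B := by
  refine le_antisymm (sup_le hAB inf_le_left) fun x hx => ?_
  obtain ⟨y, hy, hfy⟩ := hsurj (mem_map_of_mem hx)
  have hfyA : f y ∈ A.map f := mem_map_of_mem hy
  refine mem_sup.mpr ⟨f y, hfyA, x - f y, mem_inf.mpr ⟨B.sub_mem hx (hAB hfyA), ?_⟩,
    add_sub_cancel _ _⟩
  rw [LinearMap.mem_ker, map_sub, ← Module.End.mul_apply, ← pow_succ, hfy, sub_self]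

end Submodule

namespace WDPure

variable {Ω V : Type*} [Field Ω] [CharZero Ω] [AddCommGroup V] [Module Ω V]
  {q : ℕ} {φ N : Module.End Ω V} {k : ℚ}

theorem eq_zero_of_pow_apply_eq_zero (h : WDPure q φ N k) {m : ℕ} (hm : 1 ≤ m) {x : V}
    (hx : x ∈ wdWeightSpace q φ (k + m)) (hNx : (N ^ m) x = 0) : x = 0 :=
  (h.2.2 m (by exact_mod_cast hm)).1 x (by exact_mod_cast hx) (by simpa using hNx)

theorem map_pow_wdWeightSpace (h : WDPure q φ N k) {m : ℕ} (hm : 1 ≤ m) :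
    (wdWeightSpace q φ (k + m)).map (N ^ m) = wdWeightSpace q φ (k - m) := by
  simpa using (h.2.2 m (by exact_mod_cast hm)).2

end WDPure

theorem statement8_general {Ω V : Type*} [Field Ω] [CharZero Ω]
    [AddCommGroup V] [Module Ω V]
    (q : ℕ) (hq : 2 ≤ q) (φ N : Module.End Ω V)
    (hrel : N * φ = (q : Ω) • (φ * N))
    (k : ℚ) (hpure : WDPure q φ N k) :
    (∀ i : ℕ, 1 ≤ i → ∀ x ∈ wdWeightSpace q φ (k + i), N x = 0 → x = 0) ∧
    (∀ i : ℕ,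
      Disjoint (Submodule.map N (wdWeightSpace q φ (k + i + 2)))
        (wdWeightSpace q φ (k + i) ⊓ LinearMap.ker (N ^ (i + 1))) ∧
      Submodule.map N (wdWeightSpace q φ (k + i + 2)) ⊔
        (wdWeightSpace q φ (k + i) ⊓ LinearMap.ker (N ^ (i + 1))) =
        wdWeightSpace q φ (k + i)) := by
  have hq0 : 0 < q := by omega
  have hcast (i : ℕ) : k + i + 2 = k + ((i + 2 : ℕ) : ℚ) := by push_cast; ring
  refine ⟨fun i hi x hx hNx => hpure.eq_zero_of_pow_apply_eq_zero hi hx ?_,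
    fun i => ⟨?_, ?_⟩⟩
  · obtain ⟨j, rfl⟩ := Nat.exists_eq_add_of_le' hi
    rw [pow_succ, Module.End.mul_apply, hNx, map_zero]
  · refine Submodule.disjoint_map_inf_ker_pow fun y hy hNy => ?_
    exact hpure.eq_zero_of_pow_apply_eq_zero (by omega) (hcast i ▸ hy) hNy
  · refine Submodule.map_sup_inf_ker_pow_eq ?_ ?_
    · simpa using map_wdWeightSpace_le hq0 hrel (k + i + 2)
    · rw [hcast, hpure.map_pow_wdWeightSpace (by omega)]
      refine (map_pow_wdWeightSpace_le hq0 hrel _ (i + 1)).trans_eq ?_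
      congr 1
      push_cast
      ring

/-- For a pure Frobenius-semisimple Weil–Deligne pair `(φ, N)` of weight `k`,
`N` is injective on `V_{k+i}` for every `i ≥ 1`, and for every `i ≥ 0` one has the direct
sum decomposition `V_{k+i} = N (V_{k+i+2}) ⊕ (V_{k+i} ∩ ker (N^{i+1}))`. -/
theorem statement8 {Ω V : Type*} [Field Ω] [CharZero Ω] [IsAlgClosed Ω]
    [AddCommGroup V] [Module Ω V] [FiniteDimensional Ω V]
    (q : ℕ) (hq : 2 ≤ q) (φ N : Module.End Ω V)
    (hφ : IsUnit φ) (hrel : N * φ = (q : Ω) • (φ * N))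
    (hdiag : (⨆ α : Ω, φ.eigenspace α) = ⊤)
    (k : ℚ) (hpure : WDPure q φ N k) :
    (∀ i : ℕ, 1 ≤ i → ∀ x ∈ wdWeightSpace q φ (k + i), N x = 0 → x = 0) ∧
    (∀ i : ℕ,
      Disjoint (Submodule.map N (wdWeightSpace q φ (k + i + 2)))
        (wdWeightSpace q φ (k + i) ⊓ LinearMap.ker (N ^ (i + 1))) ∧
      Submodule.map N (wdWeightSpace q φ (k + i + 2)) ⊔
        (wdWeightSpace q φ (k + i) ⊓ LinearMap.ker (N ^ (i + 1))) =
        wdWeightSpace q φ (k + i)) :=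
  statement8_general q hq φ N hrel k hpure
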